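/- The s-weak order is anti-isomorphic to itself: the map φ sending an s-decreasing tree T to the tree with card_{φ(T)}(b,a) = s(b) − card_T(b,a) for all a < b is an involution on s-decreasing trees satisfying T ≼ R if and only if φ(R) ≼ φ(T). -/

import Mathlib

/-- Planar rooted trees: leaves are unlabeled; internal nodes carry a natural
number label and an ordered list of children. -/
inductive STree : Type where
  | leaf : STree
  | node : ℕ → List STree → STree

namespace STree

mutual
  /-- `x` occurs as the label of an internal node of the tree. -/
  def mem (x : ℕ) : STree → Bool
    | .leaf => false
    | .node a cs => x == a || memL x cs
  def memL (x : ℕ) : List STree → Bool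
    | [] => false
    | t :: ts => mem x t || memL x ts
end

mutual
  /-- The list of internal node labels, in preorder. -/
  def labels : STree → List ℕ
    | .leaf => []
    | .node a cs => a :: labelsL cs
  def labelsL : List STree → List ℕ
    | [] => []
    | t :: ts => labels t ++ labelsL ts
end

mutual
  /-- Local well-formedness for the signature `s` : an internal node labeled `a`
  has `s a + 1` children, and all labels below it are smaller than `a`. -/
  def wf (s : ℕ → ℕ) : STree → Prop
    | .leaf => True
    | .node a cs => cs.length = s a + 1 ∧ (∀ b ∈ labelsL cs, b < a) ∧ wfL s cs
  def wfL (s : ℕ → ℕ) : List STree → Prop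
    | [] => True
    | t :: ts => wf s t ∧ wfL s ts
end

/-- `T` is an `s`-decreasing tree: its internal nodes are labeled bijectively by
`1, …, n`, node `i` has `s i + 1` ordered children, and all descendants of a node
have smaller labels. -/
def IsSDecreasingTree (n : ℕ) (s : ℕ → ℕ) (T : STree) : Prop :=
  wf s T ∧ (labels T).Perm (List.range' 1 n)

/-- Index of the first tree of the list containing the label `x`. -/
def idxOf (x : ℕ) : List STree → ℕ
  | [] => 0
  | t :: ts => if mem x t then 0 else idxOf x ts + 1

mutual
  /-- The cardinality `card_T(y,x)` of the pair `(y,x)` in the tree: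
  `0` if `x` is (weakly) left of `y`, `i` if `x` lies in the `i`-th child
  subtree of `y`, and `s y` if `x` is right of `y`. -/
  def card (s : ℕ → ℕ) (y x : ℕ) : STree → ℕ
    | .leaf => 0
    | .node a cs => if a = y then idxOf x cs else cardL s y x cs
  def cardL (s : ℕ → ℕ) (y x : ℕ) : List STree → ℕ
    | [] => 0
    | t :: ts =>
      if mem y t then
        (if mem x t then card s y x t else if memL x ts then s y else 0)
      else (if mem x t then 0 else cardL s y x ts)
end

/-- The tree-inversion multiset of `T`, as a multiplicity function on pairs
`(y,x)` with `1 ≤ x < y ≤ n`. -/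
def treeInv (n : ℕ) (s : ℕ → ℕ) (T : STree) : ℕ → ℕ → ℕ := fun y x =>
  if 1 ≤ x ∧ x < y ∧ y ≤ n then card s y x T else 0

/-- A multi inversion set on `1, …, n` bounded by the weak composition `s`. -/
def IsMultiInvSet (n : ℕ) (s : ℕ → ℕ) (I : ℕ → ℕ → ℕ) : Prop :=
  (∀ y x, I y x ≤ s y) ∧ ∀ y x, ¬(1 ≤ x ∧ x < y ∧ y ≤ n) → I y x = 0

/-- Transitivity: for `a < b < c`, `card(c,b) = i` implies `card(b,a) = 0` or
`card(c,a) ≥ i`. -/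
def InvTransitive (I : ℕ → ℕ → ℕ) : Prop :=
  ∀ a b c : ℕ, a < b → b < c → I b a = 0 ∨ I c b ≤ I c a

/-- Planarity: for `a < b < c`, `card(c,a) = i` implies `card(b,a) = s b` or
`card(c,b) ≥ i`. -/
def InvPlanar (s : ℕ → ℕ) (I : ℕ → ℕ → ℕ) : Prop :=
  ∀ a b c : ℕ, a < b → b < c → I b a = s b ∨ I c a ≤ I c b

/-- An `s`-tree-inversion set: a bounded multi inversion set that is transitive
and planar. -/
def IsTreeInvSet (n : ℕ) (s : ℕ → ℕ) (I : ℕ → ℕ → ℕ) : Prop :=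
  IsMultiInvSet n s I ∧ InvTransitive I ∧ InvPlanar s I

/-- Inclusion of multi inversion sets: pointwise comparison of multiplicities. -/
def invLE (I J : ℕ → ℕ → ℕ) : Prop := ∀ y x, I y x ≤ J y x

/-- The `s`-weak order: inclusion of tree-inversion multisets. -/
def sWeakLE (n : ℕ) (s : ℕ → ℕ) (T R : STree) : Prop :=
  invLE (treeInv n s T) (treeInv n s R)

/-- Union of multi inversion sets: pointwise maximum. -/
def invUnion (I J : ℕ → ℕ → ℕ) : ℕ → ℕ → ℕ := fun y x => max (I y x) (J y x)

/-- Transitive closure: `tc I (c,a)` is the maximal value of `I (b₁, b₂)` over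
all transitivity paths `c = b₁ > b₂ > … > b_k = a` (consecutive entries have
positive multiplicity). -/
noncomputable def tc (I : ℕ → ℕ → ℕ) : ℕ → ℕ → ℕ := fun c a =>
  sSup {v | ∃ (b : ℕ) (l : List ℕ),
    List.Chain (fun u w => w < u ∧ 0 < I u w) c (b :: l) ∧
    (b :: l).getLast (List.cons_ne_nil b l) = a ∧ v = I c b}

/-- Adding the inversion `(c,a)`: increase its multiplicity by one. -/
def addInv (I : ℕ → ℕ → ℕ) (c a : ℕ) : ℕ → ℕ → ℕ := fun y x =>
  if y = c ∧ x = a then I y x + 1 else I y x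

mutual
  /-- `a` is a (proper) descendant of the node labeled `c`. -/
  def descIn (c a : ℕ) : STree → Bool
    | .leaf => false
    | .node b cs => (b == c && memL a cs) || descInL c a cs
  def descInL (c a : ℕ) : List STree → Bool
    | [] => false
    | t :: ts => descIn c a t || descInL c a ts
end

mutual
  /-- `a` belongs to the rightmost child subtree of the node labeled `c`. -/
  def inRight (c a : ℕ) : STree → Bool
    | .leaf => false
    | .node b cs =>
      (b == c && (match cs.getLast? with
        | some t => mem a t
        | none => false)) || inRightL c a cs
  def inRightL (c a : ℕ) : List STree → Bool
    | [] => false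
    | t :: ts => inRight c a t || inRightL c a ts
end

mutual
  /-- `a` belongs to the leftmost child subtree of the node labeled `c`. -/
  def inLeft (c a : ℕ) : STree → Bool
    | .leaf => false
    | .node b cs =>
      (b == c && (match cs.head? with
        | some t => mem a t
        | none => false)) || inLeftL c a cs
  def inLeftL (c a : ℕ) : List STree → Bool
    | [] => false
    | t :: ts => inLeft c a t || inLeftL c a ts
end

mutual
  /-- The rightmost child subtree of the node labeled `a` is empty (a leaf). -/
  def rightEmpty (a : ℕ) : STree → Bool
    | .leaf => false
    | .node b cs =>
      (b == a && (match cs.getLast? with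
        | some .leaf => true
        | _ => false)) || rightEmptyL a cs
  def rightEmptyL (a : ℕ) : List STree → Bool
    | [] => false
    | t :: ts => rightEmpty a t || rightEmptyL a ts
end

/-- `(a,c)` is a tree-ascent of `T`: `a` is a descendant of `c`, not in the
rightmost subtree of `c`; `a` lies in the rightmost subtree of any `b` with
`a < b < c` having `a` as a descendant; and if `s a > 0` the rightmost
(strict right) subtree of `a` is empty. -/
def IsTreeAscent (s : ℕ → ℕ) (T : STree) (a c : ℕ) : Prop :=
  a < c ∧ descIn c a T = true ∧ inRight c a T = false ∧
  (∀ b : ℕ, a < b → b < c → descIn b a T = true → inRight b a T = true) ∧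
  (0 < s a → rightEmpty a T = true)

/-- `a` is the root label of the tree. -/
def hasRoot (a : ℕ) : STree → Bool
  | .leaf => false
  | .node b _ => a == b

mutual
  /-- `a` is a direct child of the node `c`, but not its rightmost child. -/
  def nonRightChild (c a : ℕ) : STree → Bool
    | .leaf => false
    | .node b cs => (b == c && cs.dropLast.any (hasRoot a)) || nonRightChildL c a cs
  def nonRightChildL (c a : ℕ) : List STree → Bool
    | [] => false
    | t :: ts => nonRightChild c a t || nonRightChildL c a ts
end

/-- `(a,c)` is a Tamari-ascent of `T`: `a` is a non-right child of `c`. -/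
def IsTamariAscent (T : STree) (a c : ℕ) : Prop :=
  a < c ∧ nonRightChild c a T = true

mutual
  /-- Horizontal mirror image of a tree: the order of children is reversed at
  every internal node. -/
  def mirror : STree → STree
    | .leaf => .leaf
    | .node a cs => .node a (mirrorL cs)
  def mirrorL : List STree → List STree
    | [] => []
    | t :: ts => mirrorL ts ++ [mirror t]
end

/-- `T` is an `s`-Tamari tree: `card(c,a) ≤ card(c,b)` for all `a < b < c`. -/
def TamariProp (n : ℕ) (s : ℕ → ℕ) (T : STree) : Prop :=
  ∀ a b c : ℕ, a < b → b < c → treeInv n s T c a ≤ treeInv n s T c b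

/-- `T` is an `s`-maximal-Tamari tree: `card(b,a) = s b` implies
`card(c,a) = s c` for all `c > b`. -/
def MaxTamariProp (n : ℕ) (s : ℕ → ℕ) (T : STree) : Prop :=
  ∀ a b c : ℕ, 1 ≤ a → a < b → b < c → c ≤ n →
    treeInv n s T b a = s b → treeInv n s T c a = s c

/-- The projection `π↓` on inversion sets:
`card_Q(c,a) = min { card_T(c,b) : a ≤ b < c }`. -/
noncomputable def pidownInv (n : ℕ) (s : ℕ → ℕ) (T : STree) : ℕ → ℕ → ℕ :=
  fun c a => sInf {v | ∃ b : ℕ, a ≤ b ∧ b < c ∧ v = treeInv n s T c b}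

open scoped Classical in
/-- The projection `π↑` on inversion sets: `card_R(c,a) = s c` if there is
`a < b < c` with `card_T(b,a) = s b`, and `card_R(c,a) = card_T(c,a)` otherwise. -/
noncomputable def piupInv (n : ℕ) (s : ℕ → ℕ) (T : STree) : ℕ → ℕ → ℕ :=
  fun c a =>
    if 1 ≤ a ∧ a < c ∧ c ≤ n then
      if ∃ b : ℕ, a < b ∧ b < c ∧ treeInv n s T b a = s b then s c
      else treeInv n s T c a
    else 0

end STree

/-!
Mirroring reverses the `s y + 1` children of the node `y`, so a label lying in the `i`-th subtree
of `y` moves to the `(s y - i)`-th one, while a label to the left of `y` ends up to its right and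
vice versa. Hence `card_{φ T}(y,x) = s y - card_T(y,x)`. Since `k ↦ s y - k` is antitone and `φ`
is an involution, `φ` reverses the `s`-weak order.
-/

namespace STree

theorem memL_append (x : ℕ) (us vs : List STree) :
    memL x (us ++ vs) = (memL x us || memL x vs) := by
  induction us with
  | nil => simp [memL]
  | cons u us ih => simp [memL, ih, Bool.or_assoc]

theorem memL_of_mem_node {x a : ℕ} {cs : List STree} (hx : mem x (.node a cs) = true)
    (hxa : x ≠ a) : memL x cs = true := by
  simpa [mem, hxa] using hx

theorem memL_of_memL_cons {x : ℕ} {t : STree} {ts : List STree}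
    (hx : memL x (t :: ts) = true) (hxt : ¬mem x t = true) : memL x ts = true := by
  simpa [memL, hxt] using hx

mutual
theorem mem_iff_mem_labels (x : ℕ) (T : STree) : mem x T = true ↔ x ∈ labels T := by
  match T with
  | .leaf => simp [mem, labels]
  | .node a cs => simp [mem, labels, memL_iff_mem_labelsL x cs]
theorem memL_iff_mem_labelsL (x : ℕ) (ts : List STree) :
    memL x ts = true ↔ x ∈ labelsL ts := by
  match ts with
  | [] => simp [memL, labelsL]
  | t :: ts => simp [memL, labelsL, mem_iff_mem_labels x t, memL_iff_mem_labelsL x ts]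
end

theorem memL_eq_false_of_mem {z : ℕ} {t : STree} {ts : List STree}
    (hnd : (labelsL (t :: ts)).Nodup) (hz : mem z t = true) : memL z ts = false := by
  rw [Bool.eq_false_iff]
  intro hzts
  exact (List.nodup_append.mp hnd).2.2 z ((mem_iff_mem_labels z t).mp hz) z
    ((memL_iff_mem_labelsL z ts).mp hzts) rfl

mutual
theorem mem_mirror (x : ℕ) (T : STree) : mem x (mirror T) = mem x T := by
  match T with
  | .leaf => rfl
  | .node a cs => simp [mirror, mem, memL_mirrorL x cs]
theorem memL_mirrorL (x : ℕ) (ts : List STree) : memL x (mirrorL ts) = memL x ts := by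
  match ts with
  | [] => rfl
  | t :: ts =>
    simp [mirrorL, memL, memL_append, memL_mirrorL x ts, mem_mirror x t, Bool.or_comm]
end

theorem length_mirrorL (ts : List STree) : (mirrorL ts).length = ts.length := by
  induction ts with
  | nil => rfl
  | cons t ts ih => simp [mirrorL, ih]

theorem mirrorL_append (us vs : List STree) :
    mirrorL (us ++ vs) = mirrorL vs ++ mirrorL us := by
  induction us with
  | nil => simp [mirrorL]
  | cons u us ih => simp [mirrorL, ih]

mutual
theorem mirror_mirror (T : STree) : mirror (mirror T) = T := by
  match T with
  | .leaf => rfl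
  | .node a cs => simp [mirror, mirrorL_mirrorL cs]
theorem mirrorL_mirrorL (ts : List STree) : mirrorL (mirrorL ts) = ts := by
  match ts with
  | [] => rfl
  | t :: ts => simp [mirrorL, mirrorL_append, mirror_mirror t, mirrorL_mirrorL ts]
end

theorem labelsL_append (us vs : List STree) :
    labelsL (us ++ vs) = labelsL us ++ labelsL vs := by
  induction us with
  | nil => simp [labelsL]
  | cons u us ih => simp [labelsL, ih]

mutual
theorem labels_mirror_perm (T : STree) : (labels (mirror T)).Perm (labels T) := by
  match T with
  | .leaf => simp [mirror]
  | .node a cs => simpa [mirror, labels] using (labelsL_mirrorL_perm cs).cons a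
theorem labelsL_mirrorL_perm (ts : List STree) : (labelsL (mirrorL ts)).Perm (labelsL ts) := by
  match ts with
  | [] => simp [mirrorL]
  | t :: ts =>
    rw [mirrorL, labelsL_append, labelsL, labelsL, labelsL, List.append_nil]
    exact ((labelsL_mirrorL_perm ts).append (labels_mirror_perm t)).trans List.perm_append_comm
end

theorem wfL_append {s : ℕ → ℕ} {us vs : List STree} (hu : wfL s us) (hv : wfL s vs) :
    wfL s (us ++ vs) := by
  induction us with
  | nil => exact hv
  | cons u us ih => exact ⟨hu.1, ih hu.2⟩

mutual
theorem wf_mirror (s : ℕ → ℕ) (T : STree) (h : wf s T) : wf s (mirror T) := by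
  match T with
  | .leaf => trivial
  | .node a cs =>
    obtain ⟨hlen, hlt, hcs⟩ := h
    exact ⟨by rw [length_mirrorL, hlen],
      fun b hb => hlt b ((labelsL_mirrorL_perm cs).mem_iff.mp hb), wfL_mirrorL s cs hcs⟩
theorem wfL_mirrorL (s : ℕ → ℕ) (ts : List STree) (h : wfL s ts) : wfL s (mirrorL ts) := by
  match ts with
  | [] => trivial
  | t :: ts => exact wfL_append (wfL_mirrorL s ts h.2) ⟨wf_mirror s t h.1, trivial⟩
end

theorem IsSDecreasingTree.mirror {n : ℕ} {s : ℕ → ℕ} {T : STree}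
    (hT : IsSDecreasingTree n s T) : IsSDecreasingTree n s (mirror T) :=
  ⟨wf_mirror s T hT.1, (labels_mirror_perm T).trans hT.2⟩

theorem idxOf_lt_length {x : ℕ} {ts : List STree} (hx : memL x ts = true) :
    idxOf x ts < ts.length := by
  induction ts with
  | nil => simp [memL] at hx
  | cons t ts ih =>
    by_cases hxt : mem x t
    · simp [idxOf, hxt]
    · simpa [idxOf, hxt] using ih (memL_of_memL_cons hx hxt)

theorem idxOf_append (x : ℕ) (us vs : List STree) :
    idxOf x (us ++ vs) = if memL x us then idxOf x us else us.length + idxOf x vs := by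
  induction us with
  | nil => simp [memL]
  | cons u us ih =>
    by_cases hxu : mem x u
    · simp [idxOf, memL, hxu]
    · by_cases hxus : memL x us
      · simp [idxOf, memL, hxu, hxus, ih]
      · simp [idxOf, memL, hxu, hxus, ih]
        omega

theorem idxOf_mirrorL {x : ℕ} {ts : List STree} (hnd : (labelsL ts).Nodup)
    (hx : memL x ts = true) : idxOf x (mirrorL ts) = ts.length - 1 - idxOf x ts := by
  induction ts with
  | nil => simp [memL] at hx
  | cons t ts ih =>
    rw [mirrorL, idxOf_append, memL_mirrorL]
    by_cases hxt : mem x t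
    · simp [memL_eq_false_of_mem hnd hxt, idxOf, hxt, length_mirrorL, mem_mirror]
    · have hxts := memL_of_memL_cons hx hxt
      have := idxOf_lt_length hxts
      simp only [hxts, if_true, ih hnd.of_append_right hxts, idxOf, hxt, Bool.false_eq_true,
        if_false, List.length_cons]
      omega

section cardL_append

variable (s : ℕ → ℕ) {y x : ℕ} {us : List STree} (vs : List STree)

theorem cardL_append_of_not_memL_of_not_memL (hy : memL y us = false)
    (hx : memL x us = false) :
    cardL s y x (us ++ vs) = cardL s y x vs := by
  induction us with
  | nil => rfl
  | cons u us ih =>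
    simp only [memL, Bool.or_eq_false_iff] at hy hx
    simp [cardL, hy.1, hx.1, ih hy.2 hx.2]

theorem cardL_append_of_memL_of_memL (hy : memL y us = true) (hx : memL x us = true) :
    cardL s y x (us ++ vs) = cardL s y x us := by
  induction us with
  | nil => simp [memL] at hy
  | cons u us ih =>
    by_cases hyu : mem y u <;> by_cases hxu : mem x u
    · simp [cardL, hyu, hxu]
    · simp [cardL, hyu, hxu, memL_append, memL_of_memL_cons hx hxu]
    · simp [cardL, hyu, hxu]
    · simp [cardL, hyu, hxu, ih (memL_of_memL_cons hy hyu) (memL_of_memL_cons hx hxu)]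

theorem cardL_append_of_not_memL_of_memL (hy : memL y us = false) (hx : memL x us = true) :
    cardL s y x (us ++ vs) = 0 := by
  induction us with
  | nil => simp [memL] at hx
  | cons u us ih =>
    simp only [memL, Bool.or_eq_false_iff] at hy
    by_cases hxu : mem x u
    · simp [cardL, hy.1, hxu]
    · simp [cardL, hy.1, hxu, ih hy.2 (memL_of_memL_cons hx hxu)]

theorem cardL_append_of_memL_of_not_memL (hy : memL y us = true) (hx : memL x us = false)
    (hxv : memL x vs = true) : cardL s y x (us ++ vs) = s y := by
  induction us with
  | nil => simp [memL] at hy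
  | cons u us ih =>
    simp only [memL, Bool.or_eq_false_iff] at hx
    by_cases hyu : mem y u
    · simp [cardL, hyu, hx.1, memL_append, hxv]
    · simp [cardL, hyu, hx.1, ih (memL_of_memL_cons hy hyu) hx.2]

end cardL_append

mutual
theorem card_mirror (s : ℕ → ℕ) {y x : ℕ} (hxy : x < y) (T : STree) (hwf : wf s T)
    (hnd : (labels T).Nodup) (hy : mem y T = true) (hx : mem x T = true) :
    card s y x (mirror T) = s y - card s y x T := by
  match T with
  | .leaf => simp [mem] at hy
  | .node a cs =>
    obtain ⟨hlen, hlt, hwfL⟩ := hwf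
    have hndcs := (List.nodup_cons.mp hnd).2
    by_cases hay : a = y
    · subst hay
      have hxcs := memL_of_mem_node hx hxy.ne
      simp only [mirror, card, if_true, idxOf_mirrorL hndcs hxcs, hlen]
      omega
    · have hycs := memL_of_mem_node hy (Ne.symm hay)
      have hya : y < a := hlt y ((memL_iff_mem_labelsL y cs).mp hycs)
      have hxcs := memL_of_mem_node hx (by omega)
      simp only [mirror, card, if_neg hay]
      exact cardL_mirrorL s hxy cs hwfL hndcs hycs hxcs
theorem cardL_mirrorL (s : ℕ → ℕ) {y x : ℕ} (hxy : x < y) (ts : List STree) (hwf : wfL s ts)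
    (hnd : (labelsL ts).Nodup) (hy : memL y ts = true) (hx : memL x ts = true) :
    cardL s y x (mirrorL ts) = s y - cardL s y x ts := by
  match ts with
  | [] => simp [memL] at hy
  | t :: ts =>
    have hndts : (labelsL ts).Nodup := hnd.of_append_right
    rw [mirrorL]
    by_cases hyt : mem y t <;> by_cases hxt : mem x t
    · have hyts := memL_eq_false_of_mem hnd hyt
      have hxts := memL_eq_false_of_mem hnd hxt
      rw [cardL_append_of_not_memL_of_not_memL s _ (by rwa [memL_mirrorL])
        (by rwa [memL_mirrorL])]
      have := card_mirror s hxy t hwf.1 (List.nodup_append.mp hnd).1 hyt hxt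
      simp [cardL, mem_mirror, hyt, hxt, this]
    · have hxts := memL_of_memL_cons hx hxt
      rw [cardL_append_of_not_memL_of_memL s _ (by rw [memL_mirrorL, memL_eq_false_of_mem hnd hyt])
        (by rwa [memL_mirrorL])]
      simp [cardL, hyt, hxt, hxts]
    · rw [cardL_append_of_memL_of_not_memL s _
        (by rw [memL_mirrorL]; exact memL_of_memL_cons hy hyt)
        (by rw [memL_mirrorL, memL_eq_false_of_mem hnd hxt]) (by simp [memL, mem_mirror, hxt])]
      simp [cardL, hyt, hxt]
    · have hyts := memL_of_memL_cons hy hyt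
      have hxts := memL_of_memL_cons hx hxt
      rw [cardL_append_of_memL_of_memL s _ (by rwa [memL_mirrorL]) (by rwa [memL_mirrorL]),
        cardL_mirrorL s hxy ts hwf.2 hndts hyts hxts]
      simp [cardL, hyt, hxt]
end

theorem treeInv_mirror {n : ℕ} {s : ℕ → ℕ} {T : STree} (hT : IsSDecreasingTree n s T)
    {b a : ℕ} (ha : 1 ≤ a) (hab : a < b) (hb : b ≤ n) :
    treeInv n s (mirror T) b a = s b - treeInv n s T b a := by
  obtain ⟨hwf, hperm⟩ := hT
  have hnd : (labels T).Nodup := hperm.nodup_iff.mpr List.nodup_range'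
  have hmem : ∀ z, 1 ≤ z → z ≤ n → mem z T = true := fun z hz1 hzn => by
    rw [mem_iff_mem_labels, hperm.mem_iff, List.mem_range'_1]
    omega
  have hrange : 1 ≤ a ∧ a < b ∧ b ≤ n := ⟨ha, hab, hb⟩
  simp only [treeInv, if_pos hrange]
  exact card_mirror s hab T hwf hnd (hmem b (by omega) hb) (hmem a ha (by omega))

theorem sWeakLE.mirror {n : ℕ} {s : ℕ → ℕ} {T R : STree} (hT : IsSDecreasingTree n s T)
    (hR : IsSDecreasingTree n s R) (h : sWeakLE n s T R) :
    sWeakLE n s (mirror R) (mirror T) := by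
  intro y x
  by_cases hrange : 1 ≤ x ∧ x < y ∧ y ≤ n
  · obtain ⟨hx, hxy, hy⟩ := hrange
    rw [treeInv_mirror hR hx hxy hy, treeInv_mirror hT hx hxy hy]
    exact Nat.sub_le_sub_left (h y x) (s y)
  · simp [treeInv, hrange]

end STree

open STree in
/-- The `s`-weak order is anti-isomorphic to itself via the mirror involution
`φ`, which satisfies `card_{φ(T)}(b,a) = s b - card_T(b,a)` and
`T ≼ R ↔ φ(R) ≼ φ(T)`. -/
theorem sWeak_symmetric (n : ℕ) (s : ℕ → ℕ) :
    (∀ T : STree, IsSDecreasingTree n s T →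
      IsSDecreasingTree n s (mirror T) ∧
      mirror (mirror T) = T ∧
      ∀ b a : ℕ, 1 ≤ a → a < b → b ≤ n →
        treeInv n s (mirror T) b a = s b - treeInv n s T b a) ∧
    ∀ T R : STree, IsSDecreasingTree n s T → IsSDecreasingTree n s R →
      (sWeakLE n s T R ↔ sWeakLE n s (mirror R) (mirror T)) := by
  refine ⟨fun T hT => ⟨hT.mirror, mirror_mirror T, fun b a => treeInv_mirror hT⟩,
    fun T R hT hR => ⟨sWeakLE.mirror hT hR, fun h => ?_⟩⟩
  simpa only [mirror_mirror] using sWeakLE.mirror hR.mirror hT.mirror h
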